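/- arXiv:1508.03261 — 7 statements merged into one kernel-verified Lean document; each statement's English description precedes it below -/
import Mathlib

section
/- Let A, B be n×n symmetric real matrices with A ⪯ B (i.e., B - A positive semidefinite), and let q be a positive integer. If additionally A and B are positive semidefinite, then tr(A^q) ≤ tr(B^q). -/
/-!
Move from `A` to `B = A + C` along the segment `M t = A + t • C`. By cyclicity of the trace,
`d/dt tr (M t ^ q) = q · tr (M t ^ (q - 1) * C)`, and for `t ≥ 0` this is the trace of a product of
two positive semidefinite matrices, hence nonnegative. So `t ↦ tr (M t ^ q)` is monotone on `[0, ∞)`.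
-/

open Matrix

attribute [local instance] Matrix.linftyOpNormedRing Matrix.linftyOpNormedAlgebra

variable {m : Type*} [Fintype m] [DecidableEq m]

open scoped MatrixOrder ComplexOrder in
theorem Matrix.PosSemidef.trace_mul_nonneg {𝕜 : Type*} [RCLike 𝕜] {X Y : Matrix m m 𝕜}
    (hX : X.PosSemidef) (hY : Y.PosSemidef) : 0 ≤ (X * Y).trace := by
  have hS : (CFC.sqrt X)ᴴ = CFC.sqrt X := (CFC.sqrt_nonneg X).posSemidef.isHermitian
  calc 0 ≤ (CFC.sqrt X * Y * (CFC.sqrt X)ᴴ).trace :=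
        (hY.mul_mul_conjTranspose_same _).trace_nonneg
    _ = (X * Y).trace := by
        rw [hS, trace_mul_cycle, CFC.sqrt_mul_sqrt_self X hX.nonneg]

theorem Matrix.trace_sum_pow_mul_mul_pow {R : Type*} [CommSemiring R] (X Y : Matrix m m R)
    (q : ℕ) :
    (∑ i ∈ Finset.range q, X ^ (q.pred - i) * Y * X ^ i).trace = q * (X ^ (q - 1) * Y).trace := by
  rw [trace_sum, Finset.sum_congr rfl fun i hi => ?_, Finset.sum_const, Finset.card_range,
    nsmul_eq_mul]
  rw [trace_mul_cycle, ← pow_add, Nat.pred_eq_sub_one,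
    Nat.add_sub_of_le (by have := Finset.mem_range.mp hi; omega)]

theorem HasDerivAt.trace_pow {𝕜 : Type*} [NontriviallyNormedField 𝕜] [CompleteSpace 𝕜]
    {f : 𝕜 → Matrix m m 𝕜} {f' : Matrix m m 𝕜} {t : 𝕜} (hf : HasDerivAt f f' t) (q : ℕ) :
    HasDerivAt (fun s => (f s ^ q).trace) (q * (f t ^ (q - 1) * f').trace) t := by
  rw [← trace_sum_pow_mul_mul_pow]
  exact (traceLinearMap m 𝕜 𝕜).toContinuousLinearMap.hasFDerivAt.comp_hasDerivAt t
    (hf.fun_pow' q)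

theorem Matrix.PosSemidef.trace_pow_le_trace_pow_add {A C : Matrix m m ℝ} (hA : A.PosSemidef)
    (hC : C.PosSemidef) (q : ℕ) : (A ^ q).trace ≤ ((A + C) ^ q).trace := by
  set p : ℝ → ℝ := fun t => ((A + t • C) ^ q).trace
  have hp : ∀ t, HasDerivAt p (q * ((A + t • C) ^ (q - 1) * C).trace) t := fun t => by
    simpa using (((hasDerivAt_id t).smul_const C).const_add A).trace_pow q
  have hp_mono : MonotoneOn p (Set.Ici 0) := by
    refine monotoneOn_of_hasDerivWithinAt_nonneg (convex_Ici 0)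
      (fun t _ => (hp t).continuousAt.continuousWithinAt) (fun t _ => (hp t).hasDerivWithinAt)
      fun t ht => ?_
    rw [interior_Ici] at ht
    exact mul_nonneg q.cast_nonneg
      (((hA.add (hC.smul (Set.mem_Ioi.mp ht).le)).pow _).trace_mul_nonneg hC)
  simpa [p] using hp_mono Set.self_mem_Ici (Set.mem_Ici.mpr zero_le_one) zero_le_one

theorem trace_pow_mono_of_loewner_general {n : ℕ} (A B : Matrix (Fin n) (Fin n) ℝ)
    (hA : A.PosSemidef) (hAB : (B - A).PosSemidef)
    (q : ℕ) :
    (A ^ q).trace ≤ (B ^ q).trace := by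
  simpa using hA.trace_pow_le_trace_pow_add hAB q

theorem trace_pow_mono_of_loewner {n : ℕ} (A B : Matrix (Fin n) (Fin n) ℝ)
    (hA : A.PosSemidef) (hB : B.PosSemidef) (hAB : (B - A).PosSemidef)
    (q : ℕ) (hq : 1 ≤ q) :
    (A ^ q).trace ≤ (B ^ q).trace :=
  trace_pow_mono_of_loewner_general A B hA hAB q
end

section
/- Let D be a symmetric n×n real matrix with 0 ⪯ D ⪯ (ε/q)·I where q ≥ 2 is an integer and 0 < ε ≤ 1. Then (I - D)^q ⪯ I - qD + (q(q-1)/2)·D^2, and consequently (I - D)^q ⪯ I - (q - ε(q-1)/2)·D. -/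
/-!
Both inequalities are instances of the continuous functional calculus: a scalar inequality
`f ≤ g` on the spectrum of `D`, which lies in `[0, ε / q] ⊆ [0, 1]`, gives `f D ⪯ g D`.
The scalar bound `(1 - x) ^ q ≤ 1 - q x + q (q - 1) x ^ 2 / 2` on `[0, 1]` follows by induction
on `q`, multiplying by `1 - x ≥ 0` (the cubic term this produces is nonpositive); when
`q x ≤ ε` the quadratic term is at most `ε (q - 1) x / 2`.
-/

open Matrix

theorem one_sub_pow_le_one_sub_mul_add_mul_sq (q : ℕ) {x : ℝ} (hx₀ : 0 ≤ x) (hx₁ : x ≤ 1) :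
    (1 - x) ^ q ≤ 1 - q * x + (q * (q - 1) / 2) * x ^ 2 := by
  induction q with
  | zero => norm_num
  | succ q ih =>
    have hc : (0 : ℝ) ≤ q * (q - 1) / 2 := by
      rcases Nat.eq_zero_or_pos q with h | h
      · simp [h]
      · have : (1 : ℝ) ≤ q := by exact_mod_cast h
        nlinarith
    have hmul := mul_le_mul_of_nonneg_right ih (sub_nonneg.2 hx₁)
    rw [pow_succ]
    push_cast
    nlinarith [mul_nonneg (mul_nonneg hc hx₀) (mul_nonneg hx₀ hx₀)]

theorem one_sub_pow_le_one_sub_mul_of_le_div {q : ℕ} (hq : 0 < q) {ε x : ℝ} (hεq : ε ≤ q)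
    (hx₀ : 0 ≤ x) (hx : x ≤ ε / q) :
    (1 - x) ^ q ≤ 1 - (q - ε * (q - 1) / 2) * x := by
  have hq₁ : (1 : ℝ) ≤ q := by exact_mod_cast hq
  have hqx : q * x ≤ ε := by rwa [le_div_iff₀ (by positivity), mul_comm] at hx
  have hx₁ : x ≤ 1 := hx.trans ((div_le_one (by positivity)).2 hεq)
  calc (1 - x) ^ q ≤ 1 - q * x + (q * (q - 1) / 2) * x ^ 2 :=
        one_sub_pow_le_one_sub_mul_add_mul_sq q hx₀ hx₁
    _ ≤ 1 - (q - ε * (q - 1) / 2) * x := by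
        nlinarith [mul_nonneg (mul_nonneg (sub_nonneg.2 hq₁) hx₀) (sub_nonneg.2 hqx)]

section FunctionalCalculus

variable {A : Type*} [TopologicalSpace A] [Ring A] [StarRing A] [Algebra ℝ A]
  [ContinuousFunctionalCalculus ℝ A IsSelfAdjoint]

lemma cfc_one_sub_pow (a : A) (q : ℕ) (ha : IsSelfAdjoint a := by cfc_tac) :
    cfc (fun x : ℝ ↦ (1 - x) ^ q) a = (1 - a) ^ q := by
  rw [cfc_pow .., cfc_sub .., cfc_const_one .., cfc_id' ..]

lemma cfc_one_sub_mul (a : A) (s : ℝ) (ha : IsSelfAdjoint a := by cfc_tac) :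
    cfc (fun x : ℝ ↦ 1 - s * x) a = 1 - s • a := by
  rw [cfc_sub .., cfc_const_one .., cfc_const_mul .., cfc_id' ..]

lemma cfc_one_sub_mul_add_mul_sq (a : A) (s t : ℝ) (ha : IsSelfAdjoint a := by cfc_tac) :
    cfc (fun x : ℝ ↦ 1 - s * x + t * x ^ 2) a = 1 - s • a + t • a ^ 2 := by
  rw [cfc_add .., cfc_one_sub_mul .., cfc_const_mul .., cfc_pow_id ..]

variable [PartialOrder A] [StarOrderedRing A] [NonnegSpectrumClass ℝ A]

namespace CFC

theorem one_sub_pow_le_one_sub_nsmul_add_smul_sq (q : ℕ) {a : A} (ha₀ : 0 ≤ a) (ha₁ : a ≤ 1) :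
    (1 - a) ^ q ≤ 1 - q • a + ((q * (q - 1) : ℝ) / 2) • a ^ 2 := by
  have hspec : ∀ x ∈ spectrum ℝ a, x ≤ 1 :=
    (le_algebraMap_iff_spectrum_le (r := (1 : ℝ))).1 (by rwa [map_one])
  rw [← Nat.cast_smul_eq_nsmul ℝ, ← cfc_one_sub_pow a, ← cfc_one_sub_mul_add_mul_sq a]
  exact cfc_mono fun x hx ↦
    one_sub_pow_le_one_sub_mul_add_mul_sq q (spectrum_nonneg_of_nonneg ha₀ hx) (hspec x hx)

theorem one_sub_pow_le_one_sub_smul {q : ℕ} (hq : 0 < q) {ε : ℝ} (hεq : ε ≤ q) {a : A}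
    (ha₀ : 0 ≤ a) (ha : a ≤ algebraMap ℝ A (ε / q)) :
    (1 - a) ^ q ≤ 1 - ((q : ℝ) - ε * ((q : ℝ) - 1) / 2) • a := by
  rw [← cfc_one_sub_pow a, ← cfc_one_sub_mul a]
  exact cfc_mono fun x hx ↦ one_sub_pow_le_one_sub_mul_of_le_div hq hεq
    (spectrum_nonneg_of_nonneg ha₀ hx) ((le_algebraMap_iff_spectrum_le).1 ha x hx)

end CFC

end FunctionalCalculus

open scoped MatrixOrder in
theorem pow_one_sub_le_general {n q : ℕ} (hq : 2 ≤ q) (ε : ℝ) (hε1 : ε ≤ 1)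
    (D : Matrix (Fin n) (Fin n) ℝ) (hD : D.PosSemidef)
    (hDle : ((ε / q) • (1 : Matrix (Fin n) (Fin n) ℝ) - D).PosSemidef) :
    ((1 - q • D + ((q * (q - 1) : ℝ) / 2) • (D ^ 2)) - (1 - D) ^ q).PosSemidef ∧
    ((1 - ((q : ℝ) - ε * ((q : ℝ) - 1) / 2) • D) - (1 - D) ^ q).PosSemidef := by
  have hεq : ε ≤ q := hε1.trans (by exact_mod_cast (by omega : 1 ≤ q))
  have hD_le : D ≤ algebraMap ℝ _ (ε / q) := by rwa [Algebra.algebraMap_eq_smul_one]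
  have hD_le_one : D ≤ 1 := CFC.le_one fun x hx ↦
    ((le_algebraMap_iff_spectrum_le).1 hD_le x hx).trans ((div_le_one (by positivity)).2 hεq)
  exact ⟨CFC.one_sub_pow_le_one_sub_nsmul_add_smul_sq q hD.nonneg hD_le_one,
    CFC.one_sub_pow_le_one_sub_smul (by omega) hεq hD.nonneg hD_le⟩

theorem pow_one_sub_le {n q : ℕ} (hq : 2 ≤ q) (ε : ℝ) (hε : 0 < ε) (hε1 : ε ≤ 1)
    (D : Matrix (Fin n) (Fin n) ℝ) (hD : D.PosSemidef)
    (hDle : ((ε / q) • (1 : Matrix (Fin n) (Fin n) ℝ) - D).PosSemidef) :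
    ((1 - q • D + ((q * (q - 1) : ℝ) / 2) • (D ^ 2)) - (1 - D) ^ q).PosSemidef ∧
    ((1 - ((q : ℝ) - ε * ((q : ℝ) - 1) / 2) • D) - (1 - D) ^ q).PosSemidef :=
  pow_one_sub_le_general hq ε hε1 D hD hDle
end

section
/- Let q ≥ 10 be an integer and 0 < ε ≤ 1/10. Let Y be a symmetric positive definite n×n real matrix and w ∈ R^n with w^T Y^{-1} w ≤ ε/q. Then tr((Y + w w^T)^{-q}) ≤ tr(Y^{-q}) - q(1-ε) · w^T Y^{-(q+1)} w. -/
/-!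
Put `N = Y⁻¹`, `v = N w` and `β = (1 + wᵀ N w)⁻¹`; by Sherman–Morrison
`B := (Y + w wᵀ)⁻¹ = N - β v vᵀ`.
Telescoping `N ^ q - B ^ q = ∑ B ^ k (N - B) N ^ (q - 1 - k)` writes the drop of the trace as
`β ∑_{k < q} vᵀ N ^ (q - 1 - k) B ^ k v`. Peeling off one factor `B = N - β v vᵀ` at a time, each
summand is at least `wᵀ N ^ (q + 1) w - β k (wᵀ N w) (wᵀ N ^ (q + 1) w)`, where the products of
moments that appear are controlled by the log-convexity of `r ↦ wᵀ N ^ r w` (Cauchy–Schwarz).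
Since `q · wᵀ N w ≤ ε`, every summand is then at least `(1 - ε) wᵀ N ^ (q + 1) w`.
-/

open Matrix Finset

theorem pow_sub_pow_eq_sum_pow_mul_sub_mul_pow {R : Type*} [Ring R] (x z : R) (m : ℕ) :
    x ^ m - z ^ m = ∑ k ∈ range m, z ^ k * (x - z) * x ^ (m - 1 - k) := by
  have hterm : ∀ k ∈ range m, z ^ k * (x - z) * x ^ (m - 1 - k) =
      z ^ k * x ^ (m - k) - z ^ (k + 1) * x ^ (m - (k + 1)) := by
    intro k hk
    rw [show m - k = m - 1 - k + 1 by have := mem_range.mp hk; omega,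
      show m - (k + 1) = m - 1 - k by omega, pow_succ', pow_succ]
    noncomm_ring
  rw [sum_congr rfl hterm, sum_range_sub' (fun k ↦ z ^ k * x ^ (m - k))]
  simp

theorem mul_le_mul_shift_of_sq_le_mul {m : ℕ → ℝ} (hpos : ∀ r, 0 < m r)
    (hm : ∀ r, m (r + 1) ^ 2 ≤ m r * m (r + 2)) {i j : ℕ} (hij : i ≤ j) (a : ℕ) :
    m (i + a) * m j ≤ m i * m (j + a) := by
  set ρ : ℕ → ℝ := fun r ↦ m (r + 1) / m r
  have hρ : Monotone ρ := monotone_nat_of_le_succ fun r ↦ by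
    rw [div_le_div_iff₀ (hpos r) (hpos (r + 1))]
    nlinarith [hm r]
  have hprod : ∀ r, m (r + a) = m r * ∏ l ∈ range a, ρ (r + l) := by
    intro r
    induction a with
    | zero => simp
    | succ a ih =>
      rw [prod_range_succ, ← mul_assoc, ← ih, ← add_assoc]
      exact (mul_div_cancel₀ _ (hpos _).ne').symm
  have hρ_nonneg : ∀ r, 0 ≤ ρ r := fun r ↦ div_nonneg (hpos _).le (hpos _).le
  calc m (i + a) * m j = m i * m j * ∏ l ∈ range a, ρ (i + l) := by rw [hprod]; ring
    _ ≤ m i * m j * ∏ l ∈ range a, ρ (j + l) :=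
      mul_le_mul_of_nonneg_left (prod_le_prod (fun _ _ ↦ hρ_nonneg _) fun _ _ ↦ hρ (by omega))
        (mul_nonneg (hpos i).le (hpos j).le)
    _ = m i * m (j + a) := by rw [hprod]; ring

section Moments

variable {ι : Type*} [Fintype ι] [DecidableEq ι] {N : Matrix ι ι ℝ}

theorem dotProduct_pow_mulVec_pow (hN : N.IsHermitian) (w : ι → ℝ) (i j k : ℕ) :
    (N ^ i *ᵥ w) ⬝ᵥ N ^ j *ᵥ (N ^ k *ᵥ w) = w ⬝ᵥ N ^ (i + j + k) *ᵥ w := by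
  rw [← vecMul_transpose, ← (hN.pow i).eq, conjTranspose_eq_transpose_of_trivial,
    transpose_transpose, ← dotProduct_mulVec, mulVec_mulVec, mulVec_mulVec, ← pow_add,
    ← pow_add]

theorem sq_dotProduct_pow_succ_mulVec_le (hN : N.PosSemidef) (w : ι → ℝ) (r : ℕ) :
    (w ⬝ᵥ N ^ (r + 1) *ᵥ w) ^ 2 ≤ (w ⬝ᵥ N ^ r *ᵥ w) * (w ⬝ᵥ N ^ (r + 2) *ᵥ w) := by
  -- Cauchy–Schwarz for the form `N ^ (r % 2)` at `N ^ (r / 2) w` and `N ^ (r / 2 + 1) w`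
  have hcs := LinearMap.BilinForm.apply_mul_apply_le_of_forall_zero_le
    (toLinearMap₂' ℝ (N ^ (r % 2)))
    (fun z ↦ by simpa [toLinearMap₂'_apply'] using (hN.pow (r % 2)).dotProduct_mulVec_nonneg z)
    (N ^ (r / 2) *ᵥ w) (N ^ (r / 2 + 1) *ᵥ w)
  simp only [toLinearMap₂'_apply', dotProduct_pow_mulVec_pow hN.isHermitian] at hcs
  rwa [show r / 2 + r % 2 + (r / 2 + 1) = r + 1 by omega,
    show r / 2 + 1 + r % 2 + r / 2 = r + 1 by omega, show r / 2 + r % 2 + r / 2 = r by omega,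
    show r / 2 + 1 + r % 2 + (r / 2 + 1) = r + 2 by omega, ← sq] at hcs

theorem dotProduct_pow_mulVec_mul_le (hN : N.PosDef) (w : ι → ℝ) (a b : ℕ) :
    (w ⬝ᵥ N ^ (a + 1) *ᵥ w) * (w ⬝ᵥ N ^ (b + 1) *ᵥ w) ≤
      (w ⬝ᵥ N *ᵥ w) * (w ⬝ᵥ N ^ (a + b + 1) *ᵥ w) := by
  rcases eq_or_ne w 0 with rfl | hw
  · simp
  have hpos : ∀ r, 0 < w ⬝ᵥ N ^ r *ᵥ w := fun r ↦ by
    have hNr := (hN.posSemidef.pow r).posDef_iff_isUnit.mpr (hN.isUnit.pow r)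
    simpa using hNr.dotProduct_mulVec_pos hw
  have := mul_le_mul_shift_of_sq_le_mul hpos (sq_dotProduct_pow_succ_mulVec_le hN.posSemidef w)
    (Nat.le_add_left 1 b) a
  rwa [add_comm 1 a, add_right_comm b 1 a, add_comm b a, pow_one] at this

end Moments

section RankOne

variable {ι R : Type*} [Fintype ι] [CommRing R]

theorem dotProduct_mul_vecMulVec_mul_mulVec (A B : Matrix ι ι R) (x y u v : ι → R) :
    x ⬝ᵥ (A * vecMulVec u v * B) *ᵥ y = (x ⬝ᵥ A *ᵥ u) * (v ⬝ᵥ B *ᵥ y) := by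
  rw [← mulVec_mulVec, ← mulVec_mulVec, vecMulVec_mulVec, mulVec_smul, dotProduct_smul]
  simp

theorem trace_mul_vecMulVec_mul (A B : Matrix ι ι R) (u v : ι → R) :
    trace (A * vecMulVec u v * B) = v ⬝ᵥ (B * A) *ᵥ u := by
  rw [trace_mul_comm, ← mul_assoc, mul_vecMulVec, trace_vecMulVec, dotProduct_comm]

theorem inv_add_vecMulVec [DecidableEq ι] {K : Type*} [Field K] {A : Matrix ι ι K}
    (hA : IsUnit A) (u v : ι → K) (h : 1 + v ⬝ᵥ A⁻¹ *ᵥ u ≠ 0) :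
    (A + vecMulVec u v)⁻¹ =
      A⁻¹ - (1 + v ⬝ᵥ A⁻¹ *ᵥ u)⁻¹ • vecMulVec (A⁻¹ *ᵥ u) (v ᵥ* A⁻¹) := by
  have hAA : A * A⁻¹ = 1 := mul_nonsing_inv A ((isUnit_iff_isUnit_det A).mp hA)
  apply inv_eq_right_inv
  have hu : (A + vecMulVec u v) *ᵥ (A⁻¹ *ᵥ u) = (1 + v ⬝ᵥ A⁻¹ *ᵥ u) • u := by
    rw [add_mulVec, mulVec_mulVec, hAA, one_mulVec, vecMulVec_mulVec]
    simp [add_smul]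
  rw [mul_sub, Matrix.mul_smul, mul_vecMulVec, hu, add_mul, hAA, vecMulVec_mul, smul_vecMulVec,
    smul_smul, inv_mul_cancel₀ h, one_smul, add_sub_cancel_right]

end RankOne

section RankOnePerturbation

variable {ι : Type*} [Fintype ι] [DecidableEq ι] {X Z : Matrix ι ι ℝ} {v : ι → ℝ} {β : ℝ}

theorem trace_pow_sub_trace_pow_of_sub_eq (h : X - Z = β • vecMulVec v v) (q : ℕ) :
    trace (X ^ q) - trace (Z ^ q) = β * ∑ k ∈ range q, v ⬝ᵥ (X ^ (q - 1 - k) * Z ^ k) *ᵥ v := by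
  rw [← trace_sub, pow_sub_pow_eq_sum_pow_mul_sub_mul_pow, trace_sum, mul_sum]
  refine sum_congr rfl fun k _ ↦ ?_
  rw [h, Matrix.mul_smul, Matrix.smul_mul, trace_smul, trace_mul_vecMulVec_mul, smul_eq_mul]

theorem dotProduct_pow_mul_pow_succ_mulVec (h : X - Z = β • vecMulVec v v) (k p : ℕ) :
    v ⬝ᵥ (X ^ p * Z ^ (k + 1)) *ᵥ v =
      v ⬝ᵥ (X ^ (p + 1) * Z ^ k) *ᵥ v - β * ((v ⬝ᵥ X ^ p *ᵥ v) * (v ⬝ᵥ Z ^ k *ᵥ v)) := by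
  have hpow : X ^ p * Z ^ (k + 1) = X ^ (p + 1) * Z ^ k - X ^ p * (X - Z) * Z ^ k := by
    rw [pow_succ', pow_succ]
    noncomm_ring
  rw [hpow, h, Matrix.mul_smul, Matrix.smul_mul, sub_mulVec, dotProduct_sub, smul_mulVec,
    dotProduct_smul, dotProduct_mul_vecMulVec_mul_mulVec, smul_eq_mul]

section Bounds

variable (h : X - Z = β • vecMulVec v v) (hβ : 0 ≤ β) (hX : X.PosSemidef) (hZ : Z.PosSemidef)
include h hβ hX hZ

theorem dotProduct_pow_mul_pow_mulVec_le (k p : ℕ) :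
    v ⬝ᵥ (X ^ p * Z ^ k) *ᵥ v ≤ v ⬝ᵥ X ^ (k + p) *ᵥ v := by
  induction k generalizing p with
  | zero => simp
  | succ k ih =>
    rw [dotProduct_pow_mul_pow_succ_mulVec h, add_right_comm, add_assoc]
    have hXp : 0 ≤ v ⬝ᵥ X ^ p *ᵥ v := by simpa using (hX.pow p).dotProduct_mulVec_nonneg v
    have hZk : 0 ≤ v ⬝ᵥ Z ^ k *ᵥ v := by simpa using (hZ.pow k).dotProduct_mulVec_nonneg v
    have := ih (p + 1)
    nlinarith [mul_nonneg hβ (mul_nonneg hXp hZk)]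

theorem sub_le_dotProduct_pow_mul_pow_mulVec {s : ℕ} {K : ℝ}
    (hK : ∀ a b, a + b + 1 = s → (v ⬝ᵥ X ^ a *ᵥ v) * (v ⬝ᵥ X ^ b *ᵥ v) ≤ K) (k p : ℕ)
    (hkp : k + p = s) :
    v ⬝ᵥ X ^ s *ᵥ v - β * k * K ≤ v ⬝ᵥ (X ^ p * Z ^ k) *ᵥ v := by
  induction k generalizing p with
  | zero => simp [← hkp]
  | succ k ih =>
    rw [dotProduct_pow_mul_pow_succ_mulVec h]
    have hXp : 0 ≤ v ⬝ᵥ X ^ p *ᵥ v := by simpa using (hX.pow p).dotProduct_mulVec_nonneg v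
    have hZk : v ⬝ᵥ Z ^ k *ᵥ v ≤ v ⬝ᵥ X ^ k *ᵥ v := by
      simpa using dotProduct_pow_mul_pow_mulVec_le h hβ hX hZ k 0
    have hprod : (v ⬝ᵥ X ^ p *ᵥ v) * (v ⬝ᵥ Z ^ k *ᵥ v) ≤ K :=
      (mul_le_mul_of_nonneg_left hZk hXp).trans (hK p k (by omega))
    have := ih (p + 1) (by omega)
    push_cast
    nlinarith [mul_le_mul_of_nonneg_left hprod hβ]

end Bounds

theorem sum_le_trace_pow_sub_trace_pow {N : Matrix ι ι ℝ} (hN : N.PosDef) (w : ι → ℝ) {β : ℝ}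
    (hβ : 0 ≤ β) (hB : (N - β • vecMulVec (N *ᵥ w) (N *ᵥ w)).PosSemidef) (q : ℕ) :
    β * ∑ k ∈ range q, (w ⬝ᵥ N ^ (q + 1) *ᵥ w -
        β * k * ((w ⬝ᵥ N *ᵥ w) * (w ⬝ᵥ N ^ (q + 1) *ᵥ w))) ≤
      trace (N ^ q) - trace ((N - β • vecMulVec (N *ᵥ w) (N *ᵥ w)) ^ q) := by
  have hmoment : ∀ r, (N *ᵥ w) ⬝ᵥ N ^ r *ᵥ (N *ᵥ w) = w ⬝ᵥ N ^ (r + 2) *ᵥ w := fun r ↦ by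
    rw [show r + 2 = 1 + r + 1 by omega, ← dotProduct_pow_mulVec_pow hN.isHermitian w 1 r 1,
      pow_one]
  rw [trace_pow_sub_trace_pow_of_sub_eq (sub_sub_cancel _ _)]
  refine mul_le_mul_of_nonneg_left (sum_le_sum fun k hk ↦ ?_) hβ
  have hk := mem_range.mp hk
  have hlower := sub_le_dotProduct_pow_mul_pow_mulVec (sub_sub_cancel _ _) hβ hN.posSemidef hB
    (s := q - 1) (K := (w ⬝ᵥ N *ᵥ w) * (w ⬝ᵥ N ^ (q + 1) *ᵥ w)) (fun a b hab ↦ ?_)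
    k (q - 1 - k) (by omega)
  · rwa [hmoment, show q - 1 + 2 = q + 1 by omega] at hlower
  · rw [hmoment, hmoment, ← show a + 1 + (b + 1) + 1 = q + 1 by omega]
    exact dotProduct_pow_mulVec_mul_le hN w (a + 1) (b + 1)

end RankOnePerturbation

theorem mul_one_sub_mul_le_inv_one_add_mul_sum {t ε M : ℝ} {q : ℕ} (ht : 0 ≤ t) (hM : 0 ≤ M)
    (hqt : q * t ≤ ε) :
    q * (1 - ε) * M ≤ (1 + t)⁻¹ * ∑ k ∈ range q, (M - (1 + t)⁻¹ * k * (t * M)) := by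
  set β := (1 + t)⁻¹
  have hβ : β * (1 + t) = 1 := inv_mul_cancel₀ (by positivity)
  have hβ0 : 0 ≤ β := by positivity
  have hβ1 : β ≤ 1 := by nlinarith
  have hβt : 1 - t ≤ β := by nlinarith
  have hterm : ∀ k ∈ range q, (1 - ε) * M ≤ β * (M - β * k * (t * M)) := by
    intro k hk
    have hkq : (k : ℝ) + 1 ≤ q := by exact_mod_cast mem_range.mp hk
    have hkt : 0 ≤ (k : ℝ) * t := by positivity
    have hcoef : 1 - ε ≤ β * (1 - β * k * t) := by
      nlinarith [mul_le_mul_of_nonneg_right (mul_le_one₀ hβ1 hβ0 hβ1) hkt]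
    nlinarith [mul_le_mul_of_nonneg_right hcoef hM]
  calc q * (1 - ε) * M = ∑ k ∈ range q, (1 - ε) * M := by simp [mul_assoc]
    _ ≤ ∑ k ∈ range q, β * (M - β * k * (t * M)) := sum_le_sum hterm
    _ = β * ∑ k ∈ range q, (M - β * k * (t * M)) := (mul_sum ..).symm

theorem trace_inv_pow_rank_one_update_le_general {n q : ℕ}
    (ε : ℝ)
    (Y : Matrix (Fin n) (Fin n) ℝ) (hY : Y.PosDef) (w : Fin n → ℝ)
    (hw : w ⬝ᵥ Y⁻¹.mulVec w ≤ ε / q) :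
    (((Y + vecMulVec w w) ^ q)⁻¹).trace ≤
      ((Y ^ q)⁻¹).trace - q * (1 - ε) * (w ⬝ᵥ ((Y ^ (q + 1))⁻¹).mulVec w) := by
  rw [← inv_pow', ← inv_pow', ← inv_pow']
  set N := Y⁻¹
  set t := w ⬝ᵥ N *ᵥ w
  have hN : N.PosDef := hY.inv
  have ht : 0 ≤ t := by simpa using hN.posSemidef.dotProduct_mulVec_nonneg w
  have hB : (Y + vecMulVec w w)⁻¹ = N - (1 + t)⁻¹ • vecMulVec (N *ᵥ w) (N *ᵥ w) := by
    rw [inv_add_vecMulVec hY.isUnit w w (by positivity), ← mulVec_transpose,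
      show Nᵀ = N from hN.isHermitian]
  have hBpos :=
    (hY.add_posSemidef (by simpa using posSemidef_vecMulVec_self_star w)).inv.posSemidef
  rw [hB] at hBpos ⊢
  rcases q.eq_zero_or_pos with rfl | hq
  · simp
  have hqt : q * t ≤ ε := by rwa [le_div_iff₀' (by positivity)] at hw
  have hdrop := sum_le_trace_pow_sub_trace_pow hN w (by positivity) hBpos q
  have hM : 0 ≤ w ⬝ᵥ N ^ (q + 1) *ᵥ w := by
    simpa using (hN.posSemidef.pow (q + 1)).dotProduct_mulVec_nonneg w
  linarith [mul_one_sub_mul_le_inv_one_add_mul_sum ht hM hqt]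

theorem trace_inv_pow_rank_one_update_le {n q : ℕ} (hq : 10 ≤ q)
    (ε : ℝ) (hε : 0 < ε) (hε1 : ε ≤ 1 / 10)
    (Y : Matrix (Fin n) (Fin n) ℝ) (hY : Y.PosDef) (w : Fin n → ℝ)
    (hw : w ⬝ᵥ Y⁻¹.mulVec w ≤ ε / q) :
    (((Y + vecMulVec w w) ^ q)⁻¹).trace ≤
      ((Y ^ q)⁻¹).trace - q * (1 - ε) * (w ⬝ᵥ ((Y ^ (q + 1))⁻¹).mulVec w) :=
  trace_inv_pow_rank_one_update_le_general ε Y hY w hw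
end

section
/- Let q ≥ 10 be an integer and 0 < ε ≤ 1/10. Let Z be a symmetric positive definite n×n real matrix and w ∈ R^n with w^T Z^{-1} w ≤ ε/q. Then Z - w w^T is positive definite and tr((Z - w w^T)^{-q}) ≤ tr(Z^{-q}) + q(1+ε) · w^T Z^{-(q+1)} w. -/
/-!
Write `X = Z⁻¹`, `s = wᵀXw`, `z = Xw` and `c = (1 - s)⁻¹`. By Sherman–Morrison
`(Z - wwᵀ)⁻¹ = Y := X + c zzᵀ`, which is positive definite. Every factor `c zzᵀ` in a power of `Y`
splits a quadratic form `zᵀ X^a Y^b z` into products of the moments `t m = wᵀ X^m w`. These form a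
log-convex sequence (Cauchy–Schwarz), so `t (a + 2) * t (b + 2) ≤ t 1 * t (a + b + 3)`, and since
`1 + c s = c` this gives `zᵀ X^a Y^b z ≤ c^b * t (a + b + 2)`. Telescoping `Y^q - X^q` then yields
`tr Y^q ≤ tr X^q + (c^q - 1) / s * t (q + 1)`, and `c^q ≤ exp (q s / (1 - s)) ≤ 1 + q s (1 + ε)`
because `q s ≤ ε` is small.
-/

open Matrix

section LogConvex

variable {t : ℕ → ℝ} (ht : ∀ m, 0 < t m) (hlc : ∀ m, t (m + 1) ^ 2 ≤ t m * t (m + 2))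
include ht hlc

theorem mul_le_mul_succ_of_sq_le_mul (m d : ℕ) :
    t (m + 1) * t (m + d) ≤ t m * t (m + d + 1) := by
  induction d with
  | zero => rw [add_zero, mul_comm]
  | succ d ih =>
    have hprod := mul_le_mul ih (hlc (m + d)) (by positivity) (mul_pos (ht _) (ht _)).le
    rw [← add_assoc]
    exact le_of_mul_le_mul_right (by linarith) (mul_pos (ht (m + d)) (ht (m + d + 1)))

theorem mul_le_mul_shift_of_sq_le_mul_s8 {i j : ℕ} (hij : i ≤ j) (k : ℕ) :
    t (i + k) * t j ≤ t i * t (j + k) := by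
  obtain ⟨d, rfl⟩ := Nat.exists_eq_add_of_le hij
  induction k with
  | zero => rfl
  | succ k ih =>
    have hprod := mul_le_mul ih (mul_le_mul_succ_of_sq_le_mul ht hlc (i + k) d)
      (mul_pos (ht _) (ht _)).le (mul_pos (ht _) (ht _)).le
    rw [show i + k + d = i + d + k by ring] at hprod
    rw [← add_assoc, ← add_assoc]
    exact le_of_mul_le_mul_right (by linarith) (mul_pos (ht (i + k)) (ht (i + d + k)))

end LogConvex

theorem inv_one_sub_pow_le {q : ℕ} {ε s : ℝ} (hq : 10 ≤ q) (hε : ε ≤ 1 / 10) (hs : 0 ≤ s)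
    (hqs : q * s ≤ ε) : ((1 - s)⁻¹) ^ q ≤ 1 + q * s * (1 + ε) := by
  have hs10 : 10 * s ≤ ε := by nlinarith [(Nat.ofNat_le_cast.mpr hq : (10 : ℝ) ≤ q)]
  have h1s : 0 < 1 - s := by linarith
  have hqs0 : 0 ≤ q * s := by positivity
  have hu : q * s / (1 - s) < 2 := by rw [div_lt_iff₀ h1s]; linarith
  have hpade : 2 ≤ (1 + ε) * (2 * (1 - s) - q * s) := by nlinarith
  calc ((1 - s)⁻¹) ^ q ≤ Real.exp (s / (1 - s)) ^ q := by
        gcongr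
        calc (1 - s)⁻¹ = s / (1 - s) + 1 := by field_simp; ring
          _ ≤ _ := Real.add_one_le_exp _
    _ = Real.exp (q * s / (1 - s)) := by rw [← Real.exp_nat_mul, mul_div_assoc]
    _ ≤ (2 + q * s / (1 - s)) / (2 - q * s / (1 - s)) :=
        Real.exp_le_two_add_div_two_sub (by positivity) hu
    _ ≤ 1 + q * s * (1 + ε) := by
        rw [div_le_iff₀ (by linarith)]
        field_simp
        nlinarith [mul_le_mul_of_nonneg_left hpade hqs0]

theorem inv_one_sub_mul_geom_sum_le {q : ℕ} {ε s : ℝ} (hq : 10 ≤ q) (hε : ε ≤ 1 / 10)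
    (hs : 0 ≤ s) (hqs : q * s ≤ ε) :
    (1 - s)⁻¹ * ∑ b ∈ Finset.range q, ((1 - s)⁻¹) ^ b ≤ q * (1 + ε) := by
  have hpow := inv_one_sub_pow_le hq hε hs hqs
  rcases hs.eq_or_lt with rfl | hs
  · simp only [sub_zero, inv_one, one_pow, Finset.sum_const, Finset.card_range, nsmul_eq_mul,
      mul_one, one_mul]
    nlinarith
  have hr : (1 - s)⁻¹ - 1 = s * (1 - s)⁻¹ := by
    have : 1 - s ≠ 0 :=
      (sub_pos.mpr (by nlinarith [(Nat.ofNat_le_cast.mpr hq : (10 : ℝ) ≤ q)])).ne'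
    field_simp
    ring
  refine le_of_mul_le_mul_left ?_ hs
  calc s * ((1 - s)⁻¹ * ∑ b ∈ Finset.range q, ((1 - s)⁻¹) ^ b)
      = ((1 - s)⁻¹) ^ q - 1 := by rw [← geom_sum_mul, hr]; ring
    _ ≤ s * (q * (1 + ε)) := by linarith

namespace Matrix

variable {ι : Type*} [Fintype ι]

theorem IsHermitian.vecMul_eq_mulVec {R : Type*} [CommSemiring R] [StarRing R] [TrivialStar R]
    {M : Matrix ι ι R} (hM : M.IsHermitian) (v : ι → R) : v ᵥ* M = M *ᵥ v := by
  rw [← vecMul_transpose, ← conjTranspose_eq_transpose_of_trivial, hM.eq]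

theorem IsHermitian.mulVec_dotProduct {R : Type*} [CommSemiring R] [StarRing R] [TrivialStar R]
    {M : Matrix ι ι R} (hM : M.IsHermitian) (u v : ι → R) : (M *ᵥ u) ⬝ᵥ v = u ⬝ᵥ M *ᵥ v := by
  rw [dotProduct_mulVec, hM.vecMul_eq_mulVec]

theorem dotProduct_mul_vecMulVec_mul_mulVec {R : Type*} [CommSemiring R] (P Q : Matrix ι ι R)
    (x y u v : ι → R) :
    u ⬝ᵥ (P * vecMulVec x y * Q) *ᵥ v = (u ⬝ᵥ P *ᵥ x) * (y ⬝ᵥ Q *ᵥ v) := by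
  rw [← mulVec_mulVec, mul_vecMulVec, vecMulVec_mulVec, op_smul_eq_smul, dotProduct_smul,
    smul_eq_mul, mul_comm]

theorem inv_sub_vecMulVec {K : Type*} [Field K] [DecidableEq ι] {Z : Matrix ι ι K}
    (hZ : IsUnit Z) (u v : ι → K) (h : v ⬝ᵥ Z⁻¹ *ᵥ u ≠ 1) :
    (Z - vecMulVec u v)⁻¹ =
      Z⁻¹ + (1 - v ⬝ᵥ Z⁻¹ *ᵥ u)⁻¹ • vecMulVec (Z⁻¹ *ᵥ u) (v ᵥ* Z⁻¹) := by
  have hs : 1 - v ⬝ᵥ Z⁻¹ *ᵥ u ≠ 0 := sub_ne_zero.mpr h.symm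
  have hZ' : IsUnit Z.det := (isUnit_iff_isUnit_det Z).mp hZ
  apply inv_eq_right_inv
  rw [sub_mul, mul_add, mul_add, mul_nonsing_inv _ hZ', Matrix.mul_smul, mul_vecMulVec,
    mulVec_mulVec, mul_nonsing_inv _ hZ', one_mulVec, vecMulVec_mul, Matrix.mul_smul,
    vecMulVec_mul_vecMulVec, vecMulVec_smul]
  linear_combination (norm := module) (inv_mul_cancel₀ hs) • vecMulVec u (v ᵥ* Z⁻¹)

theorem PosSemidef.dotProduct_mulVec_sq_le {M : Matrix ι ι ℝ} (hM : M.PosSemidef) (u v : ι → ℝ) :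
    (u ⬝ᵥ M *ᵥ v) ^ 2 ≤ (u ⬝ᵥ M *ᵥ u) * (v ⬝ᵥ M *ᵥ v) := by
  let := M.toSeminormedAddCommGroup hM
  let := M.toInnerProductSpace hM
  have := real_inner_mul_inner_self_le u v
  change (M *ᵥ v) ⬝ᵥ star u * ((M *ᵥ v) ⬝ᵥ star u) ≤
    (M *ᵥ u) ⬝ᵥ star u * ((M *ᵥ v) ⬝ᵥ star v) at this
  simpa only [star_trivial, dotProduct_comm _ u, dotProduct_comm _ v, sq] using this

open scoped ComplexOrder in
theorem PosDef.pow {𝕜 : Type*} [RCLike 𝕜] [DecidableEq ι] {M : Matrix ι ι 𝕜} (hM : M.PosDef)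
    (k : ℕ) : (M ^ k).PosDef :=
  (hM.posSemidef.pow k).posDef_iff_isUnit.mpr (hM.isUnit.pow k)

theorem PosSemidef.dotProduct_pow_mulVec_sq_le [DecidableEq ι] {M : Matrix ι ι ℝ}
    (hM : M.PosSemidef) (w : ι → ℝ) (m : ℕ) :
    (w ⬝ᵥ (M ^ (m + 1)) *ᵥ w) ^ 2 ≤ (w ⬝ᵥ (M ^ m) *ᵥ w) * (w ⬝ᵥ (M ^ (m + 2)) *ᵥ w) := by
  have h := (hM.pow m).dotProduct_mulVec_sq_le w (M *ᵥ w)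
  rwa [mulVec_mulVec, ← pow_succ, hM.isHermitian.mulVec_dotProduct, mulVec_mulVec,
    ← pow_succ'] at h

theorem PosDef.dotProduct_pow_mulVec_shift_mul_le [DecidableEq ι] {M : Matrix ι ι ℝ}
    (hM : M.PosDef) (w : ι → ℝ) {i j : ℕ} (hij : i ≤ j) (k : ℕ) :
    (w ⬝ᵥ (M ^ (i + k)) *ᵥ w) * (w ⬝ᵥ (M ^ j) *ᵥ w) ≤
      (w ⬝ᵥ (M ^ i) *ᵥ w) * (w ⬝ᵥ (M ^ (j + k)) *ᵥ w) := by
  rcases eq_or_ne w 0 with rfl | hw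
  · simp
  exact mul_le_mul_shift_of_sq_le_mul_s8
    (fun m ↦ by simpa using (hM.pow m).dotProduct_mulVec_pos hw)
    (hM.posSemidef.dotProduct_pow_mulVec_sq_le w) hij k

section RankOneUpdate

variable [DecidableEq ι] {M : Matrix ι ι ℝ} (hM : M.PosDef) (w : ι → ℝ) {c : ℝ} (hc : 0 ≤ c)
include hM hc

theorem PosDef.dotProduct_pow_mul_rankOneUpdate_pow_mulVec_le (b a : ℕ) :
    (M *ᵥ w) ⬝ᵥ (M ^ a * (M + c • vecMulVec (M *ᵥ w) (M *ᵥ w)) ^ b) *ᵥ (M *ᵥ w) ≤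
      (1 + c * (w ⬝ᵥ M *ᵥ w)) ^ b * (w ⬝ᵥ (M ^ (a + b + 2)) *ᵥ w) := by
  set z := M *ᵥ w
  set Y := M + c • vecMulVec z z
  have hz : ∀ a, z ⬝ᵥ (M ^ a) *ᵥ z = w ⬝ᵥ (M ^ (a + 2)) *ᵥ w := fun a ↦ by
    rw [hM.isHermitian.mulVec_dotProduct, mulVec_mulVec, mulVec_mulVec, ← pow_succ', ← pow_succ]
  have ht : ∀ m, 0 ≤ w ⬝ᵥ (M ^ m) *ᵥ w := fun m ↦ by
    simpa using (hM.posSemidef.pow m).dotProduct_mulVec_nonneg w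
  induction b generalizing a with
  | zero => simpa using (hz a).le
  | succ b ih =>
    have hsplit : M ^ a * Y ^ (b + 1) =
        M ^ (a + 1) * Y ^ b + c • (M ^ a * vecMulVec z z * Y ^ b) := by
      rw [pow_succ', pow_succ]
      simp only [Y, add_mul, mul_add, smul_mul_assoc, Matrix.mul_smul, mul_assoc]
    have hr : 0 ≤ (1 + c * (w ⬝ᵥ z)) ^ b := by
      have : 0 ≤ w ⬝ᵥ z := by simpa using ht 1
      positivity
    have hshift := hM.dotProduct_pow_mulVec_shift_mul_le w (i := 1) (j := b + 2) (by omega) (a + 1)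
    rw [pow_one, show 1 + (a + 1) = a + 2 by ring,
      show b + 2 + (a + 1) = a + (b + 1) + 2 by ring] at hshift
    have h1 := ih (a + 1)
    rw [show a + 1 + b + 2 = a + (b + 1) + 2 by ring] at h1
    have h0 := ih 0
    rw [pow_zero, one_mul, zero_add] at h0
    rw [hsplit, add_mulVec, dotProduct_add, smul_mulVec, dotProduct_smul, smul_eq_mul,
      dotProduct_mul_vecMulVec_mul_mulVec, hz]
    linear_combination h1 + mul_le_mul_of_nonneg_left h0 (mul_nonneg hc (ht (a + 2))) +
      mul_le_mul_of_nonneg_left hshift (mul_nonneg hc hr)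

theorem PosDef.trace_rankOneUpdate_pow_mul_pow_le (m j : ℕ) :
    ((M + c • vecMulVec (M *ᵥ w) (M *ᵥ w)) ^ m * M ^ j).trace ≤
      (M ^ (m + j)).trace + c * (∑ b ∈ Finset.range m, (1 + c * (w ⬝ᵥ M *ᵥ w)) ^ b) *
        (w ⬝ᵥ (M ^ (m + j + 1)) *ᵥ w) := by
  set z := M *ᵥ w
  set Y := M + c • vecMulVec z z
  induction m generalizing j with
  | zero => simp
  | succ m ih =>
    have hsplit : Y ^ (m + 1) * M ^ j =
        Y ^ m * M ^ (j + 1) + c • (Y ^ m * (vecMulVec z z * M ^ j)) := by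
      rw [pow_succ, pow_succ']
      simp only [Y, add_mul, mul_add, smul_mul_assoc, Matrix.mul_smul, mul_assoc]
    have hword := hM.dotProduct_pow_mul_rankOneUpdate_pow_mulVec_le w hc m j
    rw [show j + m + 2 = m + 1 + j + 1 by ring] at hword
    have h := ih (j + 1)
    rw [show m + (j + 1) = m + 1 + j by ring] at h
    rw [hsplit, trace_add, trace_smul, smul_eq_mul, trace_mul_comm (Y ^ m) (vecMulVec z z * M ^ j),
      mul_assoc, vecMulVec_mul, trace_vecMulVec, dotProduct_comm, ← dotProduct_mulVec,
      Finset.sum_range_succ]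
    linear_combination h + mul_le_mul_of_nonneg_left hword hc

end RankOneUpdate

end Matrix

theorem trace_inv_pow_rank_one_downdate_le_general {n q : ℕ} (hq : 10 ≤ q)
    (ε : ℝ) (hε1 : ε ≤ 1 / 10)
    (Z : Matrix (Fin n) (Fin n) ℝ) (hZ : Z.PosDef) (w : Fin n → ℝ)
    (hw : w ⬝ᵥ Z⁻¹.mulVec w ≤ ε / q) :
    (Z - vecMulVec w w).PosDef ∧
      (((Z - vecMulVec w w) ^ q)⁻¹).trace ≤
        ((Z ^ q)⁻¹).trace + q * (1 + ε) * (w ⬝ᵥ ((Z ^ (q + 1))⁻¹).mulVec w) := by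
  set s := w ⬝ᵥ Z⁻¹ *ᵥ w
  have hX : Z⁻¹.PosDef := hZ.inv
  have hs : 0 ≤ s := by simpa using hX.posSemidef.dotProduct_mulVec_nonneg w
  have hqs : q * s ≤ ε := by rwa [le_div_iff₀ (by positivity), mul_comm] at hw
  have hs1 : s < 1 := by nlinarith [(Nat.ofNat_le_cast.mpr hq : (10 : ℝ) ≤ q)]
  have h1s : 0 < 1 - s := by linarith
  have hc : 0 ≤ (1 - s)⁻¹ := inv_nonneg.mpr h1s.le
  have hinv : (Z - vecMulVec w w)⁻¹ = Z⁻¹ + (1 - s)⁻¹ • vecMulVec (Z⁻¹ *ᵥ w) (Z⁻¹ *ᵥ w) := by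
    rw [inv_sub_vecMulVec hZ.isUnit w w hs1.ne, hX.isHermitian.vecMul_eq_mulVec]
  have hpos : (Z - vecMulVec w w)⁻¹.PosDef :=
    hinv ▸ hX.add_posSemidef ((posSemidef_vecMulVec_self_star _).smul hc)
  refine ⟨posDef_inv_iff.mp hpos, ?_⟩
  have htr := hX.trace_rankOneUpdate_pow_mul_pow_le w hc q 0
  rw [pow_zero, mul_one, add_zero,
    show 1 + (1 - s)⁻¹ * s = (1 - s)⁻¹ by field_simp; ring] at htr
  have hmoment : 0 ≤ w ⬝ᵥ (Z⁻¹ ^ (q + 1)) *ᵥ w := by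
    simpa using (hX.posSemidef.pow (q + 1)).dotProduct_mulVec_nonneg w
  rw [← inv_pow', hinv, ← inv_pow', ← inv_pow']
  exact htr.trans (add_le_add_right (mul_le_mul_of_nonneg_right
    (inv_one_sub_mul_geom_sum_le hq hε1 hs hqs) hmoment) _)

theorem trace_inv_pow_rank_one_downdate_le {n q : ℕ} (hq : 10 ≤ q)
    (ε : ℝ) (hε : 0 < ε) (hε1 : ε ≤ 1 / 10)
    (Z : Matrix (Fin n) (Fin n) ℝ) (hZ : Z.PosDef) (w : Fin n → ℝ)
    (hw : w ⬝ᵥ Z⁻¹.mulVec w ≤ ε / q) :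
    (Z - vecMulVec w w).PosDef ∧
      (((Z - vecMulVec w w) ^ q)⁻¹).trace ≤
        ((Z ^ q)⁻¹).trace + q * (1 + ε) * (w ⬝ᵥ ((Z ^ (q + 1))⁻¹).mulVec w) :=
  trace_inv_pow_rank_one_downdate_le_general hq ε hε1 Z hZ w hw
end

section
/- Let A be symmetric with ℓI ≺ A ≺ uI, let Δ_u ≥ 0 and Δ_ℓ ≥ 0 with ℓ + Δ_ℓ < u + Δ_u and (ℓ + Δ_ℓ)I ≺ A. Define f(t) = tr(((u + tΔ_u)I - A)^{-q}) + tr((A - (ℓ + tΔ_ℓ)I)^{-q}) for t ∈ [0,1]. Then f is convex on [0,1], and hence f'(1) ≥ f(1) - f(0). -/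
/-!
Diagonalising `A`, both traces become sums over the eigenvalues `μ` of `A` of
`((u + tΔu - μ) ^ q)⁻¹` and `((μ - ℓ - tΔℓ) ^ q)⁻¹`, whose bases stay positive for `t ∈ [0, 1]`.
Each summand is the convex function `x ↦ (x ^ q)⁻¹` on `(0, ∞)` composed with an affine map of `t`,
so the sum is convex, and the inequality is the tangent-line inequality `φ 1 - φ 0 ≤ φ' 1` of
these convex functions.
-/

open Finset Set
open scoped ComplexOrder MatrixOrder

theorem ConvexOn.sum {𝕜 E β ι : Type*} [Semiring 𝕜] [PartialOrder 𝕜] [AddCommMonoid E]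
    [AddCommMonoid β] [PartialOrder β] [IsOrderedAddMonoid β] [SMul 𝕜 E] [Module 𝕜 β]
    {s : Set E} (hs : Convex 𝕜 s) {t : Finset ι} {f : ι → E → β}
    (hf : ∀ i ∈ t, ConvexOn 𝕜 s (f i)) :
    ConvexOn 𝕜 s fun x => ∑ i ∈ t, f i x := by
  classical
  induction t using Finset.induction_on with
  | empty => simpa using convexOn_const 0 hs
  | insert a t ha ih =>
    simp only [sum_insert ha]
    exact (hf a (mem_insert_self a t)).add (ih fun i hi => hf i (mem_insert_of_mem hi))

theorem convexOn_inv_pow_affine (q : ℕ) {a b : ℝ} {s : Set ℝ} (hs : Convex ℝ s)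
    (hpos : ∀ t ∈ s, 0 < a + t * b) : ConvexOn ℝ s fun t => ((a + t * b) ^ q)⁻¹ := by
  let g : ℝ →ᵃ[ℝ] ℝ := AffineMap.lineMap a (a + b)
  have hg : ∀ t, g t = a + t * b := fun t => by
    simp only [g, AffineMap.lineMap_apply_ring]
    ring
  have hsub : s ⊆ g ⁻¹' Ioi 0 := fun t ht => by simpa [hg] using hpos t ht
  refine (((convexOn_zpow (-q)).comp_affineMap g).subset hsub hs).congr fun t _ => ?_
  simp [hg, _root_.zpow_neg]

theorem hasDerivAt_inv_pow_affine (q : ℕ) {a b t : ℝ} (h : a + t * b ≠ 0) :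
    HasDerivAt (fun t => ((a + t * b) ^ q)⁻¹) (-q * ((a + t * b) ^ (q + 1))⁻¹ * b) t := by
  have hlin : HasDerivAt (fun t => a + t * b) b t := by
    simpa using ((hasDerivAt_id t).mul_const b).const_add a
  have hcomp := (hasDerivAt_zpow (-(q : ℤ)) _ (Or.inl h)).comp t hlin
  have hfun : ((fun x : ℝ => x ^ (-(q : ℤ))) ∘ fun t => a + t * b) =
      fun t => ((a + t * b) ^ q)⁻¹ := by
    ext y
    simp
  rw [hfun, show -(q : ℤ) - 1 = -((q + 1 : ℕ) : ℤ) by push_cast; ring, _root_.zpow_neg,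
    zpow_natCast] at hcomp
  exact hcomp.congr_deriv (by push_cast; ring)

theorem inv_pow_sub_inv_pow_le (q : ℕ) {x y : ℝ} (hx : 0 < x) (hy : 0 < y) :
    (y ^ q)⁻¹ - (x ^ q)⁻¹ ≤ -q * (y ^ (q + 1))⁻¹ * (y - x) := by
  have hpos : ∀ t ∈ Icc (0 : ℝ) 1, 0 < x + t * (y - x) := fun t ⟨h0, h1⟩ => by
    rcases h0.eq_or_lt with rfl | ht
    · simpa using hx
    · nlinarith [mul_pos ht hy, mul_nonneg (sub_nonneg.2 h1) hx.le]
  have hslope := (convexOn_inv_pow_affine q (convex_Icc 0 1) hpos).slope_le_of_hasDerivAt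
    (left_mem_Icc.mpr zero_le_one) (right_mem_Icc.mpr zero_le_one) zero_lt_one
    (hasDerivAt_inv_pow_affine q (by simpa using hy.ne'))
  simpa [slope_def_field] using hslope

theorem convexOn_inv_pow_barrier (q : ℕ) {u ℓ Δu Δℓ μ : ℝ} (hΔu : 0 ≤ Δu) (hΔℓ : 0 ≤ Δℓ)
    (hμu : μ < u) (hℓμ : ℓ + Δℓ < μ) :
    ConvexOn ℝ (Icc 0 1) fun t => ((u + t * Δu - μ) ^ q)⁻¹ + ((μ - (ℓ + t * Δℓ)) ^ q)⁻¹ := by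
  refine ((convexOn_inv_pow_affine q (a := u - μ) (b := Δu) (convex_Icc 0 1) fun t ht => ?_).add
    (convexOn_inv_pow_affine q (a := μ - ℓ) (b := -Δℓ) (convex_Icc 0 1) fun t ht => ?_)).congr
      fun t _ => ?_
  · nlinarith [mul_nonneg ht.1 hΔu]
  · nlinarith [mul_le_of_le_one_left hΔℓ ht.2]
  · simp only [Pi.add_apply]
    ring

theorem inv_pow_barrier_sub_le (q : ℕ) {u ℓ Δu Δℓ μ : ℝ} (hΔu : 0 ≤ Δu) (hΔℓ : 0 ≤ Δℓ)
    (hμu : μ < u) (hℓμ : ℓ + Δℓ < μ) :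
    ((u + Δu - μ) ^ q)⁻¹ - ((u - μ) ^ q)⁻¹ + (((μ - (ℓ + Δℓ)) ^ q)⁻¹ - ((μ - ℓ) ^ q)⁻¹) ≤
      -q * Δu * ((u + Δu - μ) ^ (q + 1))⁻¹ + q * Δℓ * ((μ - (ℓ + Δℓ)) ^ (q + 1))⁻¹ := by
  have hupper := inv_pow_sub_inv_pow_le q (x := u - μ) (y := u + Δu - μ)
    (by linarith) (by linarith)
  have hlower := inv_pow_sub_inv_pow_le q (x := μ - ℓ) (y := μ - (ℓ + Δℓ))
    (by linarith) (by linarith)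
  linear_combination hupper + hlower

namespace Matrix.IsHermitian

variable {n 𝕜 : Type*} [Fintype n] [DecidableEq n] [RCLike 𝕜] {A : Matrix n n 𝕜}

theorem trace_cfc (hA : A.IsHermitian) (f : ℝ → ℝ) :
    (cfc f A).trace = ∑ i, (f (hA.eigenvalues i) : 𝕜) := by
  rw [hA.cfc_eq, IsHermitian.cfc, Unitary.conjStarAlgAut_apply, trace_mul_cycle,
    Unitary.coe_star_mul_self, one_mul, trace_diagonal]
  rfl

theorem inv_pow_cfc (hA : A.IsHermitian) (f : ℝ → ℝ) (p : ℕ)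
    (hf : ∀ i, f (hA.eigenvalues i) ≠ 0) :
    (cfc f A ^ p)⁻¹ = cfc (fun x => (f x ^ p)⁻¹) A := by
  have hf' : ∀ x ∈ spectrum ℝ A, f x ^ p ≠ 0 := by
    rw [hA.spectrum_real_eq_range_eigenvalues]
    rintro _ ⟨i, rfl⟩
    exact pow_ne_zero p (hf i)
  rw [nonsing_inv_eq_ringInverse, ← cfc_pow _ _ _ (A.finite_real_spectrum.continuousOn _),
    cfc_inv _ _ hf' (A.finite_real_spectrum.continuousOn _)]

theorem trace_inv_pow_cfc (hA : A.IsHermitian) (f : ℝ → ℝ) (p : ℕ)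
    (hf : ∀ i, f (hA.eigenvalues i) ≠ 0) :
    ((cfc f A ^ p)⁻¹).trace = ∑ i, (((f (hA.eigenvalues i) ^ p)⁻¹ : ℝ) : 𝕜) := by
  rw [hA.inv_pow_cfc f p hf, hA.trace_cfc]

theorem posDef_cfc_iff (hA : A.IsHermitian) (f : ℝ → ℝ) :
    (cfc f A).PosDef ↔ ∀ i, 0 < f (hA.eigenvalues i) := by
  rw [← isStrictlyPositive_iff_posDef,
    cfc_isStrictlyPositive_iff f A (A.finite_real_spectrum.continuousOn _),
    hA.spectrum_real_eq_range_eigenvalues, forall_mem_range]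

theorem smul_one_sub_eq_cfc (hA : A.IsHermitian) (c : ℝ) :
    c • (1 : Matrix n n 𝕜) - A = cfc (fun x => c - x) A := by
  rw [cfc_sub .., cfc_const .., cfc_id' .., Algebra.algebraMap_eq_smul_one]

theorem sub_smul_one_eq_cfc (hA : A.IsHermitian) (c : ℝ) :
    A - c • (1 : Matrix n n 𝕜) = cfc (fun x => x - c) A := by
  rw [cfc_sub .., cfc_const .., cfc_id' .., Algebra.algebraMap_eq_smul_one]

theorem eigenvalues_lt_of_posDef_smul_one_sub (hA : A.IsHermitian) {c : ℝ}
    (h : (c • (1 : Matrix n n 𝕜) - A).PosDef) (i : n) : hA.eigenvalues i < c :=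
  sub_pos.mp <| (hA.posDef_cfc_iff _).mp (hA.smul_one_sub_eq_cfc c ▸ h) i

theorem lt_eigenvalues_of_posDef_sub_smul_one (hA : A.IsHermitian) {c : ℝ}
    (h : (A - c • (1 : Matrix n n 𝕜)).PosDef) (i : n) : c < hA.eigenvalues i :=
  sub_pos.mp <| (hA.posDef_cfc_iff _).mp (hA.sub_smul_one_eq_cfc c ▸ h) i

theorem trace_inv_pow_smul_one_sub (hA : A.IsHermitian) {c : ℝ}
    (hc : ∀ i, hA.eigenvalues i ≠ c) (p : ℕ) :
    (((c • (1 : Matrix n n 𝕜) - A) ^ p)⁻¹).trace =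
      ∑ i, ((((c - hA.eigenvalues i) ^ p)⁻¹ : ℝ) : 𝕜) :=
  hA.smul_one_sub_eq_cfc c ▸ hA.trace_inv_pow_cfc _ p fun i => sub_ne_zero.mpr (hc i).symm

theorem trace_inv_pow_sub_smul_one (hA : A.IsHermitian) {c : ℝ}
    (hc : ∀ i, hA.eigenvalues i ≠ c) (p : ℕ) :
    (((A - c • (1 : Matrix n n 𝕜)) ^ p)⁻¹).trace =
      ∑ i, ((((hA.eigenvalues i - c) ^ p)⁻¹ : ℝ) : 𝕜) :=
  hA.sub_smul_one_eq_cfc c ▸ hA.trace_inv_pow_cfc _ p fun i => sub_ne_zero.mpr (hc i)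

end Matrix.IsHermitian

theorem barrier_potential_convex_general {n q : ℕ}
    (A : Matrix (Fin n) (Fin n) ℝ) (hA : A.IsHermitian)
    (u ℓ Δu Δℓ : ℝ) (hΔu : 0 ≤ Δu) (hΔℓ : 0 ≤ Δℓ)
    (hu : (u • (1 : Matrix (Fin n) (Fin n) ℝ) - A).PosDef)
    (hl' : (A - (ℓ + Δℓ) • (1 : Matrix (Fin n) (Fin n) ℝ)).PosDef) :
    ConvexOn ℝ (Set.Icc (0 : ℝ) 1) (fun t : ℝ =>
      ((((u + t * Δu) • (1 : Matrix (Fin n) (Fin n) ℝ) - A) ^ q)⁻¹).trace +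
      (((A - (ℓ + t * Δℓ) • (1 : Matrix (Fin n) (Fin n) ℝ)) ^ q)⁻¹).trace) ∧
    ((((u + Δu) • (1 : Matrix (Fin n) (Fin n) ℝ) - A) ^ q)⁻¹).trace +
      (((A - (ℓ + Δℓ) • (1 : Matrix (Fin n) (Fin n) ℝ)) ^ q)⁻¹).trace -
      (((u • (1 : Matrix (Fin n) (Fin n) ℝ) - A) ^ q)⁻¹).trace -
      (((A - ℓ • (1 : Matrix (Fin n) (Fin n) ℝ)) ^ q)⁻¹).trace ≤
    -(q : ℝ) * Δu * ((((u + Δu) • (1 : Matrix (Fin n) (Fin n) ℝ) - A) ^ (q + 1))⁻¹).trace +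
      (q : ℝ) * Δℓ * (((A - (ℓ + Δℓ) • (1 : Matrix (Fin n) (Fin n) ℝ)) ^ (q + 1))⁻¹).trace := by
  set ev := hA.eigenvalues
  have hev_lt : ∀ i, ev i < u := hA.eigenvalues_lt_of_posDef_smul_one_sub hu
  have lt_hev : ∀ i, ℓ + Δℓ < ev i := hA.lt_eigenvalues_of_posDef_sub_smul_one hl'
  have trace_upper : ∀ c, (∀ i, ev i < c) → ∀ p : ℕ,
      (((c • (1 : Matrix (Fin n) (Fin n) ℝ) - A) ^ p)⁻¹).trace = ∑ i, ((c - ev i) ^ p)⁻¹ :=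
    fun c hc p => by simpa using hA.trace_inv_pow_smul_one_sub (fun i => (hc i).ne) p
  have trace_lower : ∀ c, (∀ i, c < ev i) → ∀ p : ℕ,
      (((A - c • (1 : Matrix (Fin n) (Fin n) ℝ)) ^ p)⁻¹).trace = ∑ i, ((ev i - c) ^ p)⁻¹ :=
    fun c hc p => by simpa using hA.trace_inv_pow_sub_smul_one (fun i => (hc i).ne') p
  constructor
  · refine (ConvexOn.sum (t := univ) (convex_Icc 0 1) fun i _ =>
      convexOn_inv_pow_barrier q hΔu hΔℓ (hev_lt i) (lt_hev i)).congr fun t ht => ?_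
    dsimp only
    have hev_lt_t : ∀ i, ev i < u + t * Δu := fun i => by
      nlinarith [hev_lt i, mul_nonneg ht.1 hΔu]
    have lt_hev_t : ∀ i, ℓ + t * Δℓ < ev i := fun i => by
      nlinarith [lt_hev i, mul_le_of_le_one_left hΔℓ ht.2]
    rw [trace_upper _ hev_lt_t, trace_lower _ lt_hev_t, sum_add_distrib]
  · have hev_lt' : ∀ i, ev i < u + Δu := fun i => by linarith [hev_lt i]
    have lt_hev' : ∀ i, ℓ < ev i := fun i => by linarith [lt_hev i]
    rw [trace_upper _ hev_lt' q, trace_upper _ hev_lt' (q + 1), trace_upper _ hev_lt q,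
      trace_lower _ lt_hev q, trace_lower _ lt_hev (q + 1), trace_lower _ lt_hev' q]
    have hsum := sum_le_sum (s := univ) fun i _ =>
      inv_pow_barrier_sub_le q hΔu hΔℓ (hev_lt i) (lt_hev i)
    simp only [sum_add_distrib, sum_sub_distrib, ← mul_sum] at hsum
    linarith

theorem barrier_potential_convex {n q : ℕ} (hq : 1 ≤ q)
    (A : Matrix (Fin n) (Fin n) ℝ) (hA : A.IsHermitian)
    (u ℓ Δu Δℓ : ℝ) (hΔu : 0 ≤ Δu) (hΔℓ : 0 ≤ Δℓ)
    (hul : ℓ + Δℓ < u + Δu)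
    (hu : (u • (1 : Matrix (Fin n) (Fin n) ℝ) - A).PosDef)
    (hl : (A - ℓ • (1 : Matrix (Fin n) (Fin n) ℝ)).PosDef)
    (hl' : (A - (ℓ + Δℓ) • (1 : Matrix (Fin n) (Fin n) ℝ)).PosDef) :
    ConvexOn ℝ (Set.Icc (0 : ℝ) 1) (fun t : ℝ =>
      ((((u + t * Δu) • (1 : Matrix (Fin n) (Fin n) ℝ) - A) ^ q)⁻¹).trace +
      (((A - (ℓ + t * Δℓ) • (1 : Matrix (Fin n) (Fin n) ℝ)) ^ q)⁻¹).trace) ∧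
    ((((u + Δu) • (1 : Matrix (Fin n) (Fin n) ℝ) - A) ^ q)⁻¹).trace +
      (((A - (ℓ + Δℓ) • (1 : Matrix (Fin n) (Fin n) ℝ)) ^ q)⁻¹).trace -
      (((u • (1 : Matrix (Fin n) (Fin n) ℝ) - A) ^ q)⁻¹).trace -
      (((A - ℓ • (1 : Matrix (Fin n) (Fin n) ℝ)) ^ q)⁻¹).trace ≤
    -(q : ℝ) * Δu * ((((u + Δu) • (1 : Matrix (Fin n) (Fin n) ℝ) - A) ^ (q + 1))⁻¹).trace +
      (q : ℝ) * Δℓ * (((A - (ℓ + Δℓ) • (1 : Matrix (Fin n) (Fin n) ℝ)) ^ (q + 1))⁻¹).trace :=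
  barrier_potential_convex_general A hA u ℓ Δu Δℓ hΔu hΔℓ hu hl'
end

section
/- Let u_0 = (2n)^{1/q}, ℓ_0 = -(2n)^{1/q} and let u_k = u_0 + Σ_{j<k} Δ_{u,j}, ℓ_k = ℓ_0 + Σ_{j<k} Δ_{ℓ,j} where for each j, Δ_{u,j} = (1+2ε)c_j and Δ_{ℓ,j} = (1-2ε)c_j for some c_j > 0, and 0 < ε ≤ 1/8. If u_k - ℓ_k ≥ 4(2n)^{1/q}, then (u_k - ℓ_k)/u_k ≤ 8ε. -/
open Finset

/-- Writing the barriers as `u = a + (1 + 2ε)S` and `ℓ = -a + (1 - 2ε)S`, the gap `u - ℓ` is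
`2a + 4εS`; once it reaches `4a`, the `a` part is dominated by `2εS` and `S ≤ u`. -/
theorem barrier_gap_le_mul_upper {a S ε : ℝ} (ha : 0 ≤ a) (hS : 0 ≤ S) (hε : 0 ≤ ε)
    (hgap : 4 * a ≤ (a + (1 + 2 * ε) * S) - (-a + (1 - 2 * ε) * S)) :
    (a + (1 + 2 * ε) * S) - (-a + (1 - 2 * ε) * S) ≤ 8 * ε * (a + (1 + 2 * ε) * S) := by
  have hS_le_upper : S ≤ a + (1 + 2 * ε) * S :=
    (le_mul_of_one_le_left hS (by linarith)).trans (le_add_of_nonneg_left ha)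
  calc (a + (1 + 2 * ε) * S) - (-a + (1 - 2 * ε) * S) = 2 * a + 4 * ε * S := by ring
    _ ≤ 8 * ε * S := by linarith
    _ ≤ 8 * ε * (a + (1 + 2 * ε) * S) := by gcongr

theorem barrier_gap_ratio_le_general {n q k : ℕ}
    (ε : ℝ) (hε : 0 < ε)
    (c : Fin k → ℝ) (hc : ∀ j, 0 < c j)
    (hend : ((2 * n : ℝ) ^ ((1 : ℝ) / q) + ∑ j, (1 + 2 * ε) * c j) -
        (-((2 * n : ℝ) ^ ((1 : ℝ) / q)) + ∑ j, (1 - 2 * ε) * c j) ≥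
        4 * (2 * n : ℝ) ^ ((1 : ℝ) / q)) :
    (((2 * n : ℝ) ^ ((1 : ℝ) / q) + ∑ j, (1 + 2 * ε) * c j) -
        (-((2 * n : ℝ) ^ ((1 : ℝ) / q)) + ∑ j, (1 - 2 * ε) * c j)) /
      ((2 * n : ℝ) ^ ((1 : ℝ) / q) + ∑ j, (1 + 2 * ε) * c j) ≤ 8 * ε := by
  set a : ℝ := (2 * n : ℝ) ^ ((1 : ℝ) / q)
  have ha : 0 ≤ a := Real.rpow_nonneg (by positivity) _
  have hS : 0 ≤ ∑ j, c j := sum_nonneg fun j _ => (hc j).le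
  simp only [← mul_sum] at hend ⊢
  exact div_le_of_le_mul₀ (by positivity) (by positivity)
    (barrier_gap_le_mul_upper ha hS hε.le hend)

theorem barrier_gap_ratio_le {n q k : ℕ} (hn : 1 ≤ n) (hq : 1 ≤ q)
    (ε : ℝ) (hε : 0 < ε) (hε8 : ε ≤ 1 / 8)
    (c : Fin k → ℝ) (hc : ∀ j, 0 < c j)
    (hend : ((2 * n : ℝ) ^ ((1 : ℝ) / q) + ∑ j, (1 + 2 * ε) * c j) -
        (-((2 * n : ℝ) ^ ((1 : ℝ) / q)) + ∑ j, (1 - 2 * ε) * c j) ≥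
        4 * (2 * n : ℝ) ^ ((1 : ℝ) / q)) :
    (((2 * n : ℝ) ^ ((1 : ℝ) / q) + ∑ j, (1 + 2 * ε) * c j) -
        (-((2 * n : ℝ) ^ ((1 : ℝ) / q)) + ∑ j, (1 - 2 * ε) * c j)) /
      ((2 * n : ℝ) ^ ((1 : ℝ) / q) + ∑ j, (1 + 2 * ε) * c j) ≤ 8 * ε :=
  barrier_gap_ratio_le_general ε hε c hc hend
end

section
/- Let ε ∈ (0, 1/10] and q ≥ 10 an integer, and let E be a symmetric n×n real matrix with 0 ⪯ E ⪯ (ε/q)·I. Then (I + E/(1 - ε/q))^q ⪯ I + q(1+ε)·E. -/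
/-!
Both sides are functions of `E`, so by the continuous functional calculus it suffices to compare
them on the spectrum of `E`, which lies in `[0, ε/q]`. There, with `u = (1 - ε/q)⁻¹` and
`t = q u x ≤ 1`, we have `(1 + u x)^q ≤ exp t ≤ 1 + t + 3t²/4`; since `q (u - 1) = ε u`,
`t = q x + ε u x`, and `t² ≤ u² q ε x`, so `u ≤ 100/99` and `q ≥ 10` keep the excess over
`1 + q x` below `q ε x`.
-/

open Matrix

theorem Real.exp_le_one_add_add_mul_sq {t : ℝ} (ht₀ : 0 ≤ t) (ht₁ : t ≤ 1) :
    Real.exp t ≤ 1 + t + 3 / 4 * t ^ 2 := by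
  have h := Real.exp_bound' ht₀ ht₁ (n := 2) (by norm_num)
  norm_num [Finset.sum_range_succ, Nat.factorial] at h
  linarith

theorem Real.one_add_pow_le_exp_mul {x : ℝ} (hx : 0 ≤ 1 + x) (q : ℕ) :
    (1 + x) ^ q ≤ Real.exp (q * x) := by
  rw [Real.exp_nat_mul]
  exact pow_le_pow_left₀ hx (by linarith [Real.add_one_le_exp x]) q

theorem one_add_inv_one_sub_mul_pow_le {q : ℕ} (hq : 10 ≤ q) {ε x : ℝ} (hε1 : ε ≤ 1 / 10)
    (hx₀ : 0 ≤ x) (hx : x ≤ ε / q) :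
    (1 + (1 - ε / q)⁻¹ * x) ^ q ≤ 1 + q * (1 + ε) * x := by
  have hq₀ : (10 : ℝ) ≤ q := by exact_mod_cast hq
  set δ := ε / q with hδ
  have hεδ : ε = q * δ := by rw [hδ]; field_simp
  have hε₀ : 0 ≤ ε := by rw [hεδ]; nlinarith
  have hδ₁ : δ ≤ 1 / 100 := by
    rw [hδ, div_le_iff₀ (by linarith)]; nlinarith
  set u := (1 - δ)⁻¹
  have hu : u * (1 - δ) = 1 := inv_mul_cancel₀ (by linarith)
  have hu₀ : 1 ≤ u := by nlinarith
  have hu₁ : u ≤ 100 / 99 := by nlinarith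
  set t := q * (u * x) with ht
  have ht₀ : 0 ≤ t := by positivity
  have htε : t ≤ u * ε := by
    have hqx : q * x ≤ ε := by rw [hεδ]; exact mul_le_mul_of_nonneg_left hx (by linarith)
    rw [ht]; nlinarith
  have ht₁ : t ≤ 1 := by nlinarith
  have ht_eq : t = q * x + ε * u * x := by
    rw [ht, hεδ]; linear_combination (q : ℝ) * x * hu
  have hεx : 0 ≤ ε * x := mul_nonneg hε₀ hx₀
  have hlin : ε * u * x ≤ 10 / 99 * (q * ε * x) := by nlinarith
  have hsq : t ^ 2 ≤ (100 / 99) ^ 2 * (q * ε * x) := by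
    have hsq_le : t ^ 2 ≤ u * ε * t := by rw [sq]; exact mul_le_mul_of_nonneg_right htε ht₀
    rw [ht] at hsq_le ⊢
    nlinarith [mul_nonneg (mul_nonneg hεx (by positivity : (0 : ℝ) ≤ q)) (by linarith : 0 ≤ u - 1)]
  calc (1 + u * x) ^ q ≤ Real.exp t := Real.one_add_pow_le_exp_mul (by positivity) q
    _ ≤ 1 + t + 3 / 4 * t ^ 2 := Real.exp_le_one_add_add_mul_sq ht₀ ht₁
    _ ≤ 1 + q * (1 + ε) * x := by nlinarith

section FunctionalCalculus

variable {A : Type*} [TopologicalSpace A] [Ring A] [StarRing A] [Algebra ℝ A]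
  [ContinuousFunctionalCalculus ℝ A IsSelfAdjoint]

theorem cfc_one_add_mul (a : A) (c : ℝ) (ha : IsSelfAdjoint a := by cfc_tac) :
    cfc (fun x => 1 + c * x) a = 1 + c • a := by
  rw [cfc_add .., cfc_const_one .., cfc_const_mul .., cfc_id' ..]

variable [PartialOrder A] [StarOrderedRing A]

theorem one_add_smul_pow_le_of_spectrum {a : A} {c d : ℝ} {q : ℕ}
    (h : ∀ x ∈ spectrum ℝ a, (1 + c * x) ^ q ≤ 1 + d * x)
    (ha : IsSelfAdjoint a := by cfc_tac) :
    (1 + c • a) ^ q ≤ 1 + d • a := by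
  have hcfc := cfc_mono h
  rwa [cfc_pow .., cfc_one_add_mul a c, cfc_one_add_mul a d] at hcfc

theorem one_add_inv_one_sub_smul_pow_le [NonnegSpectrumClass ℝ A] {q : ℕ} (hq : 10 ≤ q)
    {ε : ℝ} (hε1 : ε ≤ 1 / 10) {a : A} (ha₀ : 0 ≤ a) (ha : a ≤ algebraMap ℝ A (ε / q)) :
    (1 + (1 - ε / q)⁻¹ • a) ^ q ≤ 1 + ((q : ℝ) * (1 + ε)) • a :=
  one_add_smul_pow_le_of_spectrum fun x hx =>
    one_add_inv_one_sub_mul_pow_le hq hε1 (spectrum_nonneg_of_nonneg ha₀ hx)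
      ((le_algebraMap_iff_spectrum_le (a := a)).mp ha x hx)

end FunctionalCalculus

open scoped MatrixOrder

theorem pow_one_add_le_general {n q : ℕ} (hq : 10 ≤ q) (ε : ℝ) (hε1 : ε ≤ 1 / 10)
    (E : Matrix (Fin n) (Fin n) ℝ) (hE : E.PosSemidef)
    (hEle : ((ε / q) • (1 : Matrix (Fin n) (Fin n) ℝ) - E).PosSemidef) :
    ((1 + ((q : ℝ) * (1 + ε)) • E) - (1 + (1 - ε / q)⁻¹ • E) ^ q).PosSemidef := by
  rw [← Matrix.le_iff]
  refine one_add_inv_one_sub_smul_pow_le hq hε1 hE.nonneg ?_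
  rwa [Matrix.le_iff, Algebra.algebraMap_eq_smul_one]

theorem pow_one_add_le {n q : ℕ} (hq : 10 ≤ q) (ε : ℝ) (hε : 0 < ε) (hε1 : ε ≤ 1 / 10)
    (E : Matrix (Fin n) (Fin n) ℝ) (hE : E.PosSemidef)
    (hEle : ((ε / q) • (1 : Matrix (Fin n) (Fin n) ℝ) - E).PosSemidef) :
    ((1 + ((q : ℝ) * (1 + ε)) • E) - (1 + (1 - ε / q)⁻¹ • E) ^ q).PosSemidef :=
  pow_one_add_le_general hq ε hε1 E hE hEle
end
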